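/- (Successive measurement probability factorisation.) Under the causal factorisation hypothesis Θ = (Θ₁ ⊗ id) ∘ (Θ₂ ⊗₂ id), for effects E₁ ∈ B₁, E₂ ∈ B₂, states ω on A, σ₁ on B₁, σ₂ on B₂ with ω(ε_{σ₁}(E₁)) ≠ 0, one has ω(ε_{σ₁⊗σ₂}(E₁ ⊗ E₂)) = ω'(ε_{σ₂}(E₂)) · ω(ε_{σ₁}(E₁)), where ω' = I_{σ₁}(E₁)(ω) / ω(ε_{σ₁}(E₁)) is the selectively updated state. -/

import Mathlib

open scoped TensorProduct ComplexOrder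

/-- Positivity in a *-algebra: a finite sum of elements of the form `Z* Z`. -/
def IsSumOfStarMulSelf {R : Type*} [Ring R] [StarRing R] (x : R) : Prop :=
  ∃ (n : ℕ) (Z : Fin n → R), x = ∑ i, star (Z i) * Z i

/-- The map `η_σ : A ⊗ B → A` determined by `η_σ(a ⊗ b) = σ(b) • a`. -/
noncomputable def eta {A B : Type*} [Ring A] [Ring B] [Algebra ℂ A] [Algebra ℂ B]
    (σ : B →ₗ[ℂ] ℂ) : A ⊗[ℂ] B →ₗ[ℂ] A :=
  (TensorProduct.rid ℂ A).toLinearMap ∘ₗ TensorProduct.map LinearMap.id σ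

/-- The product functional `ω ⊗ σ` on `A ⊗ B`. -/
noncomputable def tensorFun {A B : Type*} [Ring A] [Ring B] [Algebra ℂ A] [Algebra ℂ B]
    (ω : A →ₗ[ℂ] ℂ) (σ : B →ₗ[ℂ] ℂ) : A ⊗[ℂ] B →ₗ[ℂ] ℂ :=
  (TensorProduct.lid ℂ ℂ).toLinearMap ∘ₗ TensorProduct.map ω σ

/-- The pre-instrument `I_σ(F)(ω)(a) = (ω ⊗ σ)(Θ(a ⊗ F))`, as a linear functional. -/
noncomputable def preInstr {A B : Type*} [Ring A] [Ring B] [Algebra ℂ A] [Algebra ℂ B]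
    (Θ : A ⊗[ℂ] B →ₐ[ℂ] A ⊗[ℂ] B) (σ : B →ₗ[ℂ] ℂ) (F : B) (ω : A →ₗ[ℂ] ℂ) :
    A →ₗ[ℂ] ℂ :=
  tensorFun ω σ ∘ₗ Θ.toLinearMap ∘ₗ (TensorProduct.mk ℂ A B).flip F

/-- Reordering isomorphism `(A ⊗ B₁) ⊗ B₂ ≃ (A ⊗ B₂) ⊗ B₁`. -/
noncomputable def reorder (A B₁ B₂ : Type*) [Ring A] [Ring B₁] [Ring B₂]
    [Algebra ℂ A] [Algebra ℂ B₁] [Algebra ℂ B₂] :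
    (A ⊗[ℂ] B₁) ⊗[ℂ] B₂ ≃ₐ[ℂ] (A ⊗[ℂ] B₂) ⊗[ℂ] B₁ :=
  (Algebra.TensorProduct.assoc ℂ ℂ ℂ A B₁ B₂).trans
    ((Algebra.TensorProduct.congr AlgEquiv.refl (Algebra.TensorProduct.comm ℂ B₁ B₂)).trans
      (Algebra.TensorProduct.assoc ℂ ℂ ℂ A B₂ B₁).symm)

/-- The extension `Θ₂ ⊗₂ id` of `Θ₂ : A ⊗ B₂ → A ⊗ B₂` to `(A ⊗ B₁) ⊗ B₂`. -/
noncomputable def extend₂ {A B₁ B₂ : Type*} [Ring A] [Ring B₁] [Ring B₂]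
    [Algebra ℂ A] [Algebra ℂ B₁] [Algebra ℂ B₂]
    (Θ₂ : A ⊗[ℂ] B₂ →ₐ[ℂ] A ⊗[ℂ] B₂) :
    (A ⊗[ℂ] B₁) ⊗[ℂ] B₂ →ₐ[ℂ] (A ⊗[ℂ] B₁) ⊗[ℂ] B₂ :=
  ((reorder A B₁ B₂).symm.toAlgHom.comp
    (Algebra.TensorProduct.map Θ₂ (AlgHom.id ℂ B₁))).comp (reorder A B₁ B₂).toAlgHom

section

variable {A B B₁ B₂ : Type*} [Ring A] [Ring B] [Ring B₁] [Ring B₂]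
  [Algebra ℂ A] [Algebra ℂ B] [Algebra ℂ B₁] [Algebra ℂ B₂]

lemma reorder_tmul (a : A) (b₁ : B₁) (b₂ : B₂) :
    reorder A B₁ B₂ ((a ⊗ₜ[ℂ] b₁) ⊗ₜ[ℂ] b₂) = (a ⊗ₜ[ℂ] b₂) ⊗ₜ[ℂ] b₁ := by
  simp [reorder]

lemma reorder_symm_tmul (a : A) (b₂ : B₂) (b₁ : B₁) :
    (reorder A B₁ B₂).symm ((a ⊗ₜ[ℂ] b₂) ⊗ₜ[ℂ] b₁) = (a ⊗ₜ[ℂ] b₁) ⊗ₜ[ℂ] b₂ := by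
  simp [reorder]

lemma extend₂_tmul (Θ₂ : A ⊗[ℂ] B₂ →ₐ[ℂ] A ⊗[ℂ] B₂)
    (a : A) (b₁ : B₁) (b₂ : B₂) :
    extend₂ Θ₂ ((a ⊗ₜ[ℂ] b₁) ⊗ₜ[ℂ] b₂) = (reorder A B₁ B₂).symm (Θ₂ (a ⊗ₜ[ℂ] b₂) ⊗ₜ[ℂ] b₁) := by
  simp [extend₂, reorder_tmul]

lemma tensorFun_tmul (ω : A →ₗ[ℂ] ℂ) (σ : B →ₗ[ℂ] ℂ) (a : A) (b : B) :
    tensorFun ω σ (a ⊗ₜ[ℂ] b) = ω a * σ b := by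
  simp [tensorFun]

lemma eta_tmul (σ : B →ₗ[ℂ] ℂ) (a : A) (b : B) : eta σ (a ⊗ₜ[ℂ] b) = σ b • a := by
  simp [eta]

lemma preInstr_apply (Θ : A ⊗[ℂ] B →ₐ[ℂ] A ⊗[ℂ] B) (σ : B →ₗ[ℂ] ℂ) (F : B)
    (ω : A →ₗ[ℂ] ℂ) (a : A) :
    preInstr Θ σ F ω a = tensorFun ω σ (Θ (a ⊗ₜ[ℂ] F)) :=
  rfl

lemma tensorFun_tensorFun_map_reorder_symm_tmul (Θ₁ : A ⊗[ℂ] B₁ →ₐ[ℂ] A ⊗[ℂ] B₁)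
    (ω : A →ₗ[ℂ] ℂ) (σ₁ : B₁ →ₗ[ℂ] ℂ) (σ₂ : B₂ →ₗ[ℂ] ℂ) (F : B₁) (y : A ⊗[ℂ] B₂) :
    tensorFun (tensorFun ω σ₁) σ₂
        (Algebra.TensorProduct.map Θ₁ (AlgHom.id ℂ B₂) ((reorder A B₁ B₂).symm (y ⊗ₜ[ℂ] F))) =
      preInstr Θ₁ σ₁ F ω (eta σ₂ y) := by
  induction y using TensorProduct.induction_on with
  | zero => simp
  | tmul a b =>
    rw [reorder_symm_tmul, Algebra.TensorProduct.map_tmul, AlgHom.id_apply, tensorFun_tmul,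
      eta_tmul, map_smul, smul_eq_mul, preInstr_apply, mul_comm]
  | add y z hy hz => simp only [TensorProduct.add_tmul, map_add, hy, hz]

/- The composition rule: under causal factorisation the joint probability functional is the
first pre-instrument evaluated on the Heisenberg-picture effect `η_{σ₂}(Θ₂(a ⊗ F₂))` of the
second measurement. -/
lemma tensorFun_tensorFun_causal_tmul
    (Θ₁ : A ⊗[ℂ] B₁ →ₐ[ℂ] A ⊗[ℂ] B₁) (Θ₂ : A ⊗[ℂ] B₂ →ₐ[ℂ] A ⊗[ℂ] B₂)
    (ω : A →ₗ[ℂ] ℂ) (σ₁ : B₁ →ₗ[ℂ] ℂ) (σ₂ : B₂ →ₗ[ℂ] ℂ) (a : A) (F₁ : B₁) (F₂ : B₂) :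
    tensorFun (tensorFun ω σ₁) σ₂
        ((Algebra.TensorProduct.map Θ₁ (AlgHom.id ℂ B₂)).comp (extend₂ Θ₂)
          ((a ⊗ₜ[ℂ] F₁) ⊗ₜ[ℂ] F₂)) =
      preInstr Θ₁ σ₁ F₁ ω (eta σ₂ (Θ₂ (a ⊗ₜ[ℂ] F₂))) := by
  rw [AlgHom.comp_apply, extend₂_tmul, tensorFun_tensorFun_map_reorder_symm_tmul]

end

theorem successive_measurement_factorisation_general {A B₁ B₂ : Type*} [Ring A] [Ring B₁]
    [Ring B₂] [Algebra ℂ A] [Algebra ℂ B₁] [Algebra ℂ B₂]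
    (Θ₁ : A ⊗[ℂ] B₁ →ₐ[ℂ] A ⊗[ℂ] B₁) (Θ₂ : A ⊗[ℂ] B₂ →ₐ[ℂ] A ⊗[ℂ] B₂)
    (Θ : (A ⊗[ℂ] B₁) ⊗[ℂ] B₂ →ₐ[ℂ] (A ⊗[ℂ] B₁) ⊗[ℂ] B₂)
    (hfact : Θ = (Algebra.TensorProduct.map Θ₁ (AlgHom.id ℂ B₂)).comp (extend₂ Θ₂))
    (ω : A →ₗ[ℂ] ℂ) (σ₁ : B₁ →ₗ[ℂ] ℂ) (σ₂ : B₂ →ₗ[ℂ] ℂ) (E₁ : B₁) (E₂ : B₂)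
    (hne : ω (eta σ₁ (Θ₁ ((1 : A) ⊗ₜ[ℂ] E₁))) ≠ 0)
    (ω' : A →ₗ[ℂ] ℂ)
    (hω' : ω' = (ω (eta σ₁ (Θ₁ ((1 : A) ⊗ₜ[ℂ] E₁))))⁻¹ • preInstr Θ₁ σ₁ E₁ ω) :
    tensorFun (tensorFun ω σ₁) σ₂ (Θ (((1 : A) ⊗ₜ[ℂ] E₁) ⊗ₜ[ℂ] E₂)) =
      ω' (eta σ₂ (Θ₂ ((1 : A) ⊗ₜ[ℂ] E₂))) * ω (eta σ₁ (Θ₁ ((1 : A) ⊗ₜ[ℂ] E₁))) := by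
  subst hfact hω'
  rw [tensorFun_tensorFun_causal_tmul, LinearMap.smul_apply, smul_eq_mul, mul_comm,
    mul_inv_cancel_left₀ hne]

/-- Successive measurement probability factorisation: under causal factorisation,
`ω(ε_{σ₁⊗σ₂}(E₁ ⊗ E₂)) = ω'(ε_{σ₂}(E₂)) · ω(ε_{σ₁}(E₁))`, where `ω'` is the
selectively updated state after a successful test of `E₁`. -/
theorem successive_measurement_factorisation {A B₁ B₂ : Type*} [Ring A] [Ring B₁]
    [Ring B₂] [Algebra ℂ A] [Algebra ℂ B₁] [Algebra ℂ B₂]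
    [StarRing A] [StarModule ℂ A]
    [StarRing B₁] [StarModule ℂ B₁] [StarRing B₂] [StarModule ℂ B₂]
    (Θ₁ : A ⊗[ℂ] B₁ →ₐ[ℂ] A ⊗[ℂ] B₁) (Θ₂ : A ⊗[ℂ] B₂ →ₐ[ℂ] A ⊗[ℂ] B₂)
    (Θ : (A ⊗[ℂ] B₁) ⊗[ℂ] B₂ →ₐ[ℂ] (A ⊗[ℂ] B₁) ⊗[ℂ] B₂)
    (hfact : Θ = (Algebra.TensorProduct.map Θ₁ (AlgHom.id ℂ B₂)).comp (extend₂ Θ₂))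
    (ω : A →ₗ[ℂ] ℂ) (hω1 : ω 1 = 1) (hωpos : ∀ x, 0 ≤ ω (star x * x))
    (σ₁ : B₁ →ₗ[ℂ] ℂ) (hσ₁1 : σ₁ 1 = 1) (hσ₁pos : ∀ b, 0 ≤ σ₁ (star b * b))
    (σ₂ : B₂ →ₗ[ℂ] ℂ) (hσ₂1 : σ₂ 1 = 1) (hσ₂pos : ∀ b, 0 ≤ σ₂ (star b * b))
    (E₁ : B₁) (hE₁ : IsSumOfStarMulSelf E₁) (hE₁' : IsSumOfStarMulSelf (1 - E₁))
    (E₂ : B₂) (hE₂ : IsSumOfStarMulSelf E₂) (hE₂' : IsSumOfStarMulSelf (1 - E₂))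
    (hne : ω (eta σ₁ (Θ₁ ((1 : A) ⊗ₜ[ℂ] E₁))) ≠ 0)
    (ω' : A →ₗ[ℂ] ℂ)
    (hω' : ω' = (ω (eta σ₁ (Θ₁ ((1 : A) ⊗ₜ[ℂ] E₁))))⁻¹ • preInstr Θ₁ σ₁ E₁ ω) :
    tensorFun (tensorFun ω σ₁) σ₂ (Θ (((1 : A) ⊗ₜ[ℂ] E₁) ⊗ₜ[ℂ] E₂)) =
      ω' (eta σ₂ (Θ₂ ((1 : A) ⊗ₜ[ℂ] E₂))) * ω (eta σ₁ (Θ₁ ((1 : A) ⊗ₜ[ℂ] E₁))) :=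
  successive_measurement_factorisation_general Θ₁ Θ₂ Θ hfact ω σ₁ σ₂ E₁ E₂ hne ω' hω'
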